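/- arXiv:1703.10888 — 3 statements merged into one kernel-verified Lean document; each statement's English description precedes it below -/
import Mathlib

section
/- Let ε, Δτ ∈ ℝ and let F be the lifted leapfrog map on ℝ⁴. Suppose x(n+1) = F(x(n)) for all n ∈ ℕ, with x(n) = (p₁(n),p₂(n),q₁(n),q₂(n)), and set C = p₁(0) + p₂(0) and q₀ = q₁(0) + q₂(0). Then the pair (p₁(n), q₁(n)) satisfies the lifted T̂_{ε,Δτ} recursion: for all n, p₁(n+1) = p₁(n) − εΔτ·tan Θₙ and q₁(n+1) = q₁(n) + p₁(n)Δτ − (ε(Δτ)²/2)·tan Θₙ, where Θₙ = π(2q₁(n) + Δτ·p₁(n) − q₀ − CΔτ(n + 1/2)). -/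
/-- The lifted leapfrog map `F : ℝ⁴ → ℝ⁴` for parameters `ε`, `Δτ`. -/
noncomputable def leapfrog (ε Δτ : ℝ) : ℝ × ℝ × ℝ × ℝ → ℝ × ℝ × ℝ × ℝ :=
  fun x =>
    let p₁ := x.1; let p₂ := x.2.1; let q₁ := x.2.2.1; let q₂ := x.2.2.2
    let θ := Real.pi * (q₁ + (Δτ / 2) * p₁ - q₂ - (Δτ / 2) * p₂)
    (p₁ - ε * Δτ * Real.tan θ,
     p₂ + ε * Δτ * Real.tan θ,
     q₁ + p₁ * Δτ - (ε * Δτ ^ 2 / 2) * Real.tan θ,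
     q₂ + p₂ * Δτ + (ε * Δτ ^ 2 / 2) * Real.tan θ)

/-- A sequence `(p n, q n)` satisfies the lifted `T̂_{ε,Δτ}` recursion (with
total momentum `C` and `q₀ = q₁(0)+q₂(0)`). -/
noncomputable def ThatRecursion (ε Δτ C q₀ : ℝ) (p q : ℕ → ℝ) : Prop :=
  ∀ n : ℕ,
    p (n + 1) = p n - ε * Δτ *
      Real.tan (Real.pi * (2 * q n + Δτ * p n - q₀ - C * Δτ * ((n : ℝ) + 1 / 2))) ∧
    q (n + 1) = q n + p n * Δτ - (ε * Δτ ^ 2 / 2) *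
      Real.tan (Real.pi * (2 * q n + Δτ * p n - q₀ - C * Δτ * ((n : ℝ) + 1 / 2)))

/-- Along any leapfrog orbit, the pair `(p₁(n), q₁(n))` satisfies the lifted
`T̂_{ε,Δτ}` recursion with `C = p₁(0)+p₂(0)` and `q₀ = q₁(0)+q₂(0)`. -/
theorem leapfrog_reduces_to_That (ε Δτ : ℝ) (x : ℕ → ℝ × ℝ × ℝ × ℝ)
    (hx : ∀ n : ℕ, x (n + 1) = leapfrog ε Δτ (x n)) :
    ThatRecursion ε Δτ ((x 0).1 + (x 0).2.1) ((x 0).2.2.1 + (x 0).2.2.2)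
      (fun n => (x n).1) (fun n => (x n).2.2.1) := by
  intro n
  set C := (x 0).1 + (x 0).2.1 with hC
  set q₀ := (x 0).2.2.1 + (x 0).2.2.2 with hq₀
  have hinv : ∀ m : ℕ, (x m).1 + (x m).2.1 = C ∧
      (x m).2.2.1 + (x m).2.2.2 = q₀ + C * Δτ * m := by
    intro m
    induction m with
    | zero => simp [hC, hq₀]
    | succ k ih =>
      rw [hx k]
      simp only [leapfrog]
      push_cast
      constructor
      · linarith [ih.1]
      · linear_combination ih.2 + Δτ * ih.1
  have h1 := (hinv n).1
  have h2 := (hinv n).2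
  have hθ : Real.pi * ((x n).2.2.1 + Δτ / 2 * (x n).1 - (x n).2.2.2 - Δτ / 2 * (x n).2.1)
      = Real.pi * (2 * (x n).2.2.1 + Δτ * (x n).1 - q₀ - C * Δτ * ((n : ℝ) + 1 / 2)) := by
    have h2' : (x n).2.2.2 = q₀ + C * Δτ * n - (x n).2.2.1 := by linarith
    have h1' : (x n).2.1 = C - (x n).1 := by linarith
    rw [h2', h1']; ring
  refine ⟨?_, ?_⟩ <;> simp only [hx n, leapfrog] <;> rw [hθ]
end

section
/- Let ε ∈ ℝ, Δτ ≠ 0 with ε > 2/(π(Δτ)²). Let t, t' ∈ ℝ with cos(πt) ≠ 0 and cos(πt') ≠ 0, and let a = (a₁, a₂) ∈ ℝ² with a₂ ≠ 0 and α(t) < a₁/a₂ < 0 (i.e., a lies in the unstable cone at t). Then the image b = J̃(t)·a = (a₂, −a₁ + 2α(t)a₂) satisfies b₂ ≠ 0 and α(t') < b₁/b₂ < 0; i.e., the Jacobian maps the unstable cone at t into the unstable cone at any point t'. -/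
/-- `α(t) = 1 − πε(Δτ)²/cos²(πt)`. -/
noncomputable def alphaT (ε Δτ t : ℝ) : ℝ :=
  1 - Real.pi * ε * Δτ ^ 2 / Real.cos (Real.pi * t) ^ 2

lemma alphaT_lt_neg_one (ε Δτ : ℝ) (hΔτ : Δτ ≠ 0)
    (hε : ε > 2 / (Real.pi * Δτ ^ 2)) (t : ℝ) (ht : Real.cos (Real.pi * t) ≠ 0) :
    alphaT ε Δτ t < -1 := by
  have hπ : (0:ℝ) < Real.pi := Real.pi_pos
  have hΔ : (0:ℝ) < Δτ ^ 2 := by positivity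
  have hden : (0:ℝ) < Real.pi * Δτ ^ 2 := by positivity
  have h2 : 2 < Real.pi * ε * Δτ ^ 2 := by
    have := (div_lt_iff₀ hden).mp hε
    nlinarith
  have hc : (0:ℝ) < Real.cos (Real.pi * t) ^ 2 := by positivity
  have hc1 : Real.cos (Real.pi * t) ^ 2 ≤ 1 := by
    nlinarith [Real.neg_one_le_cos (Real.pi * t), Real.cos_le_one (Real.pi * t)]
  have : (2:ℝ) < Real.pi * ε * Δτ ^ 2 / Real.cos (Real.pi * t) ^ 2 := by
    rw [lt_div_iff₀ hc]; nlinarith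
  unfold alphaT; linarith

/-- In the regime `ε > 2/(π(Δτ)²)`, the Jacobian `J̃(t)` maps the unstable cone
`{(a₁,a₂) : a₂ ≠ 0, α(t) < a₁/a₂ < 0}` at `t` into the unstable cone at any
regular point `t'`. -/
theorem unstable_cone_invariant_pos (ε Δτ : ℝ) (hΔτ : Δτ ≠ 0)
    (hε : ε > 2 / (Real.pi * Δτ ^ 2))
    (t t' : ℝ) (ht : Real.cos (Real.pi * t) ≠ 0) (ht' : Real.cos (Real.pi * t') ≠ 0)
    (a₁ a₂ : ℝ) (ha₂ : a₂ ≠ 0)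
    (hlow : alphaT ε Δτ t < a₁ / a₂) (hhigh : a₁ / a₂ < 0) :
    (-a₁ + 2 * alphaT ε Δτ t * a₂) ≠ 0 ∧
    alphaT ε Δτ t' < a₂ / (-a₁ + 2 * alphaT ε Δτ t * a₂) ∧
    a₂ / (-a₁ + 2 * alphaT ε Δτ t * a₂) < 0 := by
  set α := alphaT ε Δτ t with hαdef
  have hα : α < -1 := alphaT_lt_neg_one ε Δτ hΔτ hε t ht
  have hα' : alphaT ε Δτ t' < -1 := alphaT_lt_neg_one ε Δτ hΔτ hε t' ht'
  set q := a₁ / a₂ with hqdef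
  have ha1 : a₁ = q * a₂ := (div_mul_cancel₀ a₁ ha₂).symm
  have hc : 2 * α - q < -1 := by linarith
  have hc0 : 2 * α - q ≠ 0 := by linarith
  have hb : -a₁ + 2 * α * a₂ = (2 * α - q) * a₂ := by rw [ha1]; ring
  have hbne : (-a₁ + 2 * α * a₂) ≠ 0 := by rw [hb]; exact mul_ne_zero hc0 ha₂
  have hratio : a₂ / (-a₁ + 2 * α * a₂) = 1 / (2 * α - q) := by
    rw [hb]; field_simp
  refine ⟨hbne, ?_, ?_⟩
  · rw [hratio]
    have : (-1:ℝ) < 1 / (2 * α - q) := by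
      rw [lt_div_iff_of_neg (by linarith : 2 * α - q < 0)]; linarith
    linarith
  · rw [hratio]
    exact div_neg_of_pos_of_neg one_pos (by linarith)
end

section
/- Let ε < 0 and Δτ ≠ 0. Let t, t' ∈ ℝ with cos(πt) ≠ 0 and cos(πt') ≠ 0, and let a = (a₁, a₂) ∈ ℝ² with a₂ ≠ 0 and 0 < a₁/a₂ < α(t) (i.e., a lies in the unstable cone at t). Then the image b = J̃(t)·a = (a₂, −a₁ + 2α(t)a₂) satisfies b₂ ≠ 0 and 0 < b₁/b₂ < α(t'); i.e., the Jacobian maps the unstable cone at t into the unstable cone at any point t'. -/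
lemma alphaT_gt_one (ε Δτ : ℝ) (hΔτ : Δτ ≠ 0) (hε : ε < 0)
    (t : ℝ) (ht : Real.cos (Real.pi * t) ≠ 0) : 1 < alphaT ε Δτ t := by
  unfold alphaT
  have hcos2 : (0:ℝ) < Real.cos (Real.pi * t) ^ 2 := by positivity
  have hπ := Real.pi_pos
  have hΔ : (0:ℝ) < Δτ ^ 2 := by positivity
  have : Real.pi * ε * Δτ ^ 2 / Real.cos (Real.pi * t) ^ 2 < 0 := by
    apply div_neg_of_neg_of_pos _ hcos2
    nlinarith [mul_neg_of_neg_of_pos hε (mul_pos hπ hΔ)]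
  linarith

/-- In the regime `ε < 0`, the Jacobian `J̃(t)` maps the unstable cone
`{(a₁,a₂) : a₂ ≠ 0, 0 < a₁/a₂ < α(t)}` at `t` into the unstable cone at any
regular point `t'`. -/
theorem unstable_cone_invariant_neg (ε Δτ : ℝ) (hΔτ : Δτ ≠ 0) (hε : ε < 0)
    (t t' : ℝ) (ht : Real.cos (Real.pi * t) ≠ 0) (ht' : Real.cos (Real.pi * t') ≠ 0)
    (a₁ a₂ : ℝ) (ha₂ : a₂ ≠ 0)
    (hlow : 0 < a₁ / a₂) (hhigh : a₁ / a₂ < alphaT ε Δτ t) :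
    (-a₁ + 2 * alphaT ε Δτ t * a₂) ≠ 0 ∧
    0 < a₂ / (-a₁ + 2 * alphaT ε Δτ t * a₂) ∧
    a₂ / (-a₁ + 2 * alphaT ε Δτ t * a₂) < alphaT ε Δτ t' := by
  have hα : 1 < alphaT ε Δτ t := alphaT_gt_one ε Δτ hΔτ hε t ht
  have hα' : 1 < alphaT ε Δτ t' := alphaT_gt_one ε Δτ hΔτ hε t' ht'
  set α := alphaT ε Δτ t with hαdef
  have hx : 1 < 2 * α - a₁ / a₂ := by linarith
  have hxpos : (0:ℝ) < 2 * α - a₁ / a₂ := by linarith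
  have hxne : (2 * α - a₁ / a₂) ≠ 0 := ne_of_gt hxpos
  have hkey : -a₁ + 2 * α * a₂ = a₂ * (2 * α - a₁ / a₂) := by
    field_simp
    ring
  have hbne : (-a₁ + 2 * α * a₂) ≠ 0 := by
    rw [hkey]; exact mul_ne_zero ha₂ hxne
  have hq : a₂ / (-a₁ + 2 * α * a₂) = 1 / (2 * α - a₁ / a₂) := by
    rw [hkey]
    field_simp
  refine ⟨hbne, ?_, ?_⟩
  · rw [hq]; positivity
  · rw [hq]
    have h1 : 1 / (2 * α - a₁ / a₂) < 1 := by
      rw [div_lt_one hxpos]; exact hx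
    linarith
end
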